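/- arXiv:1708.06865 — 8 statements merged into one kernel-verified Lean document; each statement's English description precedes it below -/
import Mathlib

section
/- (Algorithm of subdivision 1, case i = 3.) Let b̃ : {α ∈ ℕ³ : |α| = 3} → ℝ. Let γ₃ = (γ₃₁,γ₃₂,γ₃₃) ∈ ℝ³ with γ₃₁+γ₃₂+γ₃₃ = 1 and set γ = (γ₃₃ + γ₃₂/3, γ₃₁ + γ₃₂/3, γ₃₂/3). Then Σ_{|ν|=3} b̃(ν) B_ν^3(γ) = Σ_{|ρ|=3} b̃₃(ρ) B_ρ^3(γ₃), where for each ρ = (ρ₁,ρ₂,ρ₃) ∈ ℕ³ with |ρ| = 3, b̃₃(ρ) = Σ_{|α|=ρ₂} b̃(α + (ρ₃, ρ₁, 0)) B_α^{ρ₂}(1/3, 1/3, 1/3). -/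
open Finset

/-- The trivariate Bernstein polynomial `B_a^d(l) = (d!/(a₁!a₂!a₃!)) l₁^{a₁} l₂^{a₂} l₃^{a₃}`. -/
noncomputable def Bern (d : ℕ) (a : Fin 3 → ℕ) (l : Fin 3 → ℝ) : ℝ :=
  ((Nat.factorial d : ℝ) /
      ((Nat.factorial (a 0) : ℝ) * (Nat.factorial (a 1) : ℝ) * (Nat.factorial (a 2) : ℝ))) *
    (l 0 ^ a 0 * l 1 ^ a 1 * l 2 ^ a 2)

/-- The `k`-th standard basis multi-index `ε_k` of `ℕ³`. -/
def eps (k : Fin 3) : Fin 3 → ℕ := fun j => if j = k then 1 else 0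

/-- The univariate Bernstein polynomial `B_k^n(t) = (n choose k) t^k (1-t)^{n-k}`
(automatically `0` when `k > n`). -/
noncomputable def bern1 (n k : ℕ) (t : ℝ) : ℝ :=
  (Nat.choose n k : ℝ) * t ^ k * (1 - t) ^ (n - k)

theorem stmt5 (b : (Fin 3 → ℕ) → ℝ) (g3 : Fin 3 → ℝ) (hg : g3 0 + g3 1 + g3 2 = 1) :
    ∑ ν ∈ Finset.Nat.antidiagonalTuple 3 3,
        b ν * Bern 3 ν ![g3 2 + g3 1 / 3, g3 0 + g3 1 / 3, g3 1 / 3] =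
      ∑ ρ ∈ Finset.Nat.antidiagonalTuple 3 3,
        (∑ a ∈ Finset.Nat.antidiagonalTuple 3 (ρ 1),
          b (a + ![ρ 2, ρ 0, 0]) * Bern (ρ 1) a (fun _ => 1 / 3)) * Bern 3 ρ g3 := by
  have h3 : (Finset.Nat.antidiagonalTuple 3 3 : Finset (Fin 3 → ℕ)) =
      {![3,0,0],![2,1,0],![2,0,1],![1,2,0],![1,1,1],![1,0,2],![0,3,0],![0,2,1],![0,1,2],![0,0,3]} := by decide
  have h2 : (Finset.Nat.antidiagonalTuple 3 2 : Finset (Fin 3 → ℕ)) =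
      {![2,0,0],![1,1,0],![1,0,1],![0,2,0],![0,1,1],![0,0,2]} := by decide
  have h1 : (Finset.Nat.antidiagonalTuple 3 1 : Finset (Fin 3 → ℕ)) =
      {![1,0,0],![0,1,0],![0,0,1]} := by decide
  have h0 : (Finset.Nat.antidiagonalTuple 3 0 : Finset (Fin 3 → ℕ)) = {![0,0,0]} := by decide
  have hgg : g3 2 = 1 - g3 0 - g3 1 := by linarith
  simp (disch := decide) only [h3, Finset.sum_insert, Finset.sum_singleton,
    Matrix.cons_val_zero, Matrix.cons_val_one, Matrix.head_cons, Matrix.cons_val_two,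
    Matrix.tail_cons, h0, h1, h2]
  simp only [Bern, Matrix.cons_val_zero, Matrix.cons_val_one, Matrix.head_cons,
    Matrix.cons_val_two, Matrix.tail_cons]
  norm_num [Nat.factorial, hgg]
  ring_nf
end

section
/- (Expansion identity used in the second subdivision algorithm.) Let λ = (λ₁,λ₂,λ₃) ∈ ℝ³ with λ₁+λ₂+λ₃ = 1 and set γ = ((5/3)λ₁, λ₂ − (2/3)λ₁ − (2/3)λ₃, (5/3)λ₃). Then for every multi-index μ = (μ₁,μ₂,μ₃) ∈ ℕ³ with |μ| = 5, B_μ^5(γ) = Σ_{|β|=5} B_{μ₁}^{β₁}(5/3) · B_{μ₃}^{β₃}(5/3) · B_β^5(λ). -/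
open Finset

set_option maxHeartbeats 2000000 in
theorem stmt6 (l : Fin 3 → ℝ) (hl : l 0 + l 1 + l 2 = 1)
    (μ : Fin 3 → ℕ) (hμ : μ 0 + μ 1 + μ 2 = 5) :
    Bern 5 μ ![5 / 3 * l 0, l 1 - 2 / 3 * l 0 - 2 / 3 * l 2, 5 / 3 * l 2] =
      ∑ β ∈ Finset.Nat.antidiagonalTuple 3 5,
        bern1 (β 0) (μ 0) (5 / 3) * bern1 (β 2) (μ 2) (5 / 3) * Bern 5 β l := by
  have h1 : l 1 = 1 - l 0 - l 2 := by linarith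
  rw [show (∑ β ∈ Finset.Nat.antidiagonalTuple 3 5,
        bern1 (β 0) (μ 0) (5 / 3) * bern1 (β 2) (μ 2) (5 / 3) * Bern 5 β l)
      = ((List.Nat.antidiagonalTuple 3 5).map
          (fun β => bern1 (β 0) (μ 0) (5 / 3) * bern1 (β 2) (μ 2) (5 / 3) * Bern 5 β l)).sum
      from rfl,
    show List.Nat.antidiagonalTuple 3 5 = [![0, 0, 5], ![0, 1, 4], ![0, 2, 3], ![0, 3, 2],
      ![0, 4, 1], ![0, 5, 0], ![1, 0, 4], ![1, 1, 3], ![1, 2, 2], ![1, 3, 1], ![1, 4, 0],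
      ![2, 0, 3], ![2, 1, 2], ![2, 2, 1], ![2, 3, 0], ![3, 0, 2], ![3, 1, 1], ![3, 2, 0],
      ![4, 0, 1], ![4, 1, 0], ![5, 0, 0]] from rfl]
  simp only [List.map_cons, List.map_nil, List.sum_cons, List.sum_nil, Bern, bern1,
    Matrix.cons_val_zero, Matrix.cons_val_one, Matrix.head_cons, Matrix.cons_val_two,
    Matrix.tail_cons, h1]
  have h2 : μ 2 = 5 - μ 0 - μ 1 := by omega
  rw [h2]
  have ha : μ 0 ≤ 5 := by omega
  have hb : μ 1 ≤ 5 - μ 0 := by omega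
  interval_cases h0 : (μ 0) <;> interval_cases h1 : (μ 1) <;>
    norm_num [Nat.factorial, Nat.choose] <;> ring
end

section
/- (Cross derivatives, part 1.) Let d ≥ r ≥ 0, b : {α ∈ ℕ³ : |α| = d} → ℝ, λ ∈ ℝ³ with λ₁+λ₂+λ₃ = 1, and δ ∈ ℝ³ with δ₁+δ₂+δ₃ = 0. Define f : ℝ → ℝ by f(t) = Σ_{|α|=d} b(α) B_α^d(λ + tδ). Then the r-th derivative of f at t = 0 equals Σ_{|α|=d−r} (d!/(d−r)!) p_α(δ) B_α^{d−r}(λ), where p_α(δ) = Σ_{|β|=r} b(α+β) B_β^r(δ). -/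
open Finset

/-!
Along the line `t ↦ l + t • δ`, the derivative of a Bernstein form
`∑_{|γ|=m+1} c γ B_γ^{m+1}` is `(m + 1) ∑_{|β|=m} c' β B_β^m`, where
`c' β = ∑_k δ_k c (β + e_k)` is one de Casteljau step of the coefficients at the
(non-barycentric) point `δ`. Iterating, the `r`-th derivative is `d!/(d-r)!` times the
Bernstein form of degree `d - r` whose coefficients are `r` de Casteljau steps at `δ`.
Finally, `r` de Casteljau steps of `b` at `δ`, evaluated at `α`, give
`∑_{|β|=r} b (α + β) B_β^r(δ)` by the recursion
`∑_{|γ|=r+1} g γ B_γ^{r+1}(x) = ∑_{|β|=r} (∑_k x_k g (β + e_k)) B_β^r(x)`,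
which again comes from reindexing `γ = β + e_k`.
-/

theorem Finset.Nat.sum_antidiagonalTuple_succ_sum_eq_sum_add_single {M : Type*}
    [AddCommMonoid M] {n : ℕ} (m : ℕ) (H : Fin n → (Fin n → ℕ) → M)
    (hH : ∀ k γ, γ k = 0 → H k γ = 0) :
    ∑ γ ∈ Nat.antidiagonalTuple n (m + 1), ∑ k, H k γ =
      ∑ k, ∑ β ∈ Nat.antidiagonalTuple n m, H k (β + Pi.single k 1) := by
  rw [sum_comm]
  refine sum_congr rfl fun k _ => ?_
  have sum_add_single (β : Fin n → ℕ) :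
      ∑ i, (β + Pi.single k 1 : Fin n → ℕ) i = ∑ i, β i + 1 := by
    simp only [Pi.add_apply, sum_add_distrib, sum_pi_single', mem_univ, if_true]
  have hinj : Set.InjOn (· + Pi.single k 1) (Nat.antidiagonalTuple n m : Set (Fin n → ℕ)) :=
    fun _ _ _ _ h => add_right_cancel h
  rw [← sum_image hinj]
  refine (sum_subset ?_ fun γ hγ hnot => hH k γ ?_).symm
  · simp only [subset_iff, mem_image, Nat.mem_antidiagonalTuple]
    rintro _ ⟨β, hβ, rfl⟩
    rw [sum_add_single, hβ]
  · by_contra hγk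
    have hγ' : γ - Pi.single k 1 + Pi.single k 1 = γ := by
      ext i
      by_cases hik : i = k
      · subst hik; simp only [Pi.add_apply, Pi.sub_apply, Pi.single_eq_same]; omega
      · simp [hik]
    refine hnot (mem_image.2 ⟨γ - Pi.single k 1, ?_, hγ'⟩)
    rw [Nat.mem_antidiagonalTuple] at hγ ⊢
    rw [← hγ', sum_add_single] at hγ
    omega

theorem Finset.Nat.sum_cast_of_mem_antidiagonalTuple {R : Type*}
    [AddCommMonoidWithOne R] {k n : ℕ} {γ : Fin k → ℕ} (hγ : γ ∈ Nat.antidiagonalTuple k n) :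
    ∑ i, (γ i : R) = n := by
  rw [← Nat.cast_sum, (Nat.mem_antidiagonalTuple).1 hγ]

namespace Bern

noncomputable def coeff (n : ℕ) (a : Fin 3 → ℕ) : ℝ :=
  (n.factorial : ℝ) / ((a 0).factorial * (a 1).factorial * (a 2).factorial)

def mono (x : Fin 3 → ℝ) (a : Fin 3 → ℕ) : ℝ := x 0 ^ a 0 * x 1 ^ a 1 * x 2 ^ a 2

theorem eq_coeff_mul_mono (n : ℕ) (a : Fin 3 → ℕ) (x : Fin 3 → ℝ) :
    Bern n a x = coeff n a * mono x a := rfl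

theorem mono_add_single (x : Fin 3 → ℝ) (β : Fin 3 → ℕ) (k : Fin 3) :
    mono x (β + Pi.single k 1) = x k * mono x β := by
  fin_cases k <;> simp [mono, pow_succ] <;> ring

theorem mul_coeff_succ_add_single (m : ℕ) (β : Fin 3 → ℕ) (k : Fin 3) :
    ((β k : ℝ) + 1) * coeff (m + 1) (β + Pi.single k 1) = (m + 1) * coeff m β := by
  have := (β 0).factorial_pos; have := (β 1).factorial_pos; have := (β 2).factorial_pos
  fin_cases k <;> simp [coeff, Nat.factorial_succ] <;> field_simp

theorem mul_succ_add_single (m : ℕ) (β : Fin 3 → ℕ) (k : Fin 3) (x : Fin 3 → ℝ) :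
    ((β k : ℝ) + 1) * Bern (m + 1) (β + Pi.single k 1) x = (m + 1) * (x k * Bern m β x) := by
  rw [eq_coeff_mul_mono, eq_coeff_mul_mono, mono_add_single, ← mul_assoc,
    mul_coeff_succ_add_single]
  ring

theorem hasDerivAt_mono_add_smul (l δ : Fin 3 → ℝ) (γ : Fin 3 → ℕ) (t : ℝ) :
    HasDerivAt (fun t => mono (l + t • δ) γ)
      (∑ k, γ k * δ k * mono (l + t • δ) (γ - Pi.single k 1)) t := by
  have hcoord (i : Fin 3) : HasDerivAt (fun t : ℝ => (l i + t * δ i) ^ γ i)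
      (γ i * (l i + t * δ i) ^ (γ i - 1) * δ i) t := by
    have hline : HasDerivAt (fun t : ℝ => l i + t * δ i) (δ i) t := by
      simpa using ((hasDerivAt_id t).mul_const (δ i)).const_add (l i)
    exact hline.pow (γ i)
  refine (((hcoord 0).fun_mul (hcoord 1)).fun_mul (hcoord 2)).congr_deriv ?_
  simp [Fin.sum_univ_three, mono, Pi.single_apply]
  ring

end Bern

noncomputable def deCasteljauStep (x : Fin 3 → ℝ) (c : (Fin 3 → ℕ) → ℝ) : (Fin 3 → ℕ) → ℝ :=
  fun β => ∑ k, x k * c (β + Pi.single k 1)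

theorem sum_mul_Bern_succ (r : ℕ) (x : Fin 3 → ℝ) (g : (Fin 3 → ℕ) → ℝ) :
    ∑ γ ∈ Nat.antidiagonalTuple 3 (r + 1), g γ * Bern (r + 1) γ x =
      ∑ β ∈ Nat.antidiagonalTuple 3 r, deCasteljauStep x g β * Bern r β x := by
  have hr : (r : ℝ) + 1 ≠ 0 := by positivity
  calc ∑ γ ∈ Nat.antidiagonalTuple 3 (r + 1), g γ * Bern (r + 1) γ x
      = ∑ γ ∈ Nat.antidiagonalTuple 3 (r + 1), ∑ k,
          g γ * (γ k / (r + 1)) * Bern (r + 1) γ x := by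
        -- insert `1 = ∑ k, γ k / (r + 1)`, valid since `|γ| = r + 1`
        refine sum_congr rfl fun γ hγ => ?_
        rw [← sum_mul, ← mul_sum, ← sum_div, Nat.sum_cast_of_mem_antidiagonalTuple hγ]
        push_cast
        rw [div_self hr, mul_one]
    _ = ∑ k, ∑ β ∈ Nat.antidiagonalTuple 3 r, g (β + Pi.single k 1) *
          ((β + Pi.single k 1 : Fin 3 → ℕ) k / (r + 1)) * Bern (r + 1) (β + Pi.single k 1) x :=
        Nat.sum_antidiagonalTuple_succ_sum_eq_sum_add_single r _ fun k γ h => by simp [h]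
    _ = ∑ β ∈ Nat.antidiagonalTuple 3 r, deCasteljauStep x g β * Bern r β x := by
        rw [sum_comm]
        refine sum_congr rfl fun β _ => ?_
        rw [deCasteljauStep, sum_mul]
        refine sum_congr rfl fun k _ => ?_
        have key := Bern.mul_succ_add_single r β k x
        simp only [Pi.add_apply, Pi.single_eq_same, Nat.cast_add, Nat.cast_one] at key ⊢
        field_simp
        linear_combination g (β + Pi.single k 1) * key

theorem deCasteljauStep_iterate_apply (x : Fin 3 → ℝ) (r : ℕ) (b : (Fin 3 → ℕ) → ℝ)
    (α : Fin 3 → ℕ) :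
    (deCasteljauStep x)^[r] b α =
      ∑ β ∈ Nat.antidiagonalTuple 3 r, b (α + β) * Bern r β x := by
  induction r generalizing b with
  | zero => simp [Bern, Nat.antidiagonalTuple_zero_right]
  | succ r ih =>
    rw [Function.iterate_succ_apply, ih, sum_mul_Bern_succ]
    simp only [deCasteljauStep, add_assoc]

theorem hasDerivAt_sum_mul_Bern_succ (m : ℕ) (c : (Fin 3 → ℕ) → ℝ) (l δ : Fin 3 → ℝ) (t : ℝ) :
    HasDerivAt (fun t => ∑ γ ∈ Nat.antidiagonalTuple 3 (m + 1), c γ * Bern (m + 1) γ (l + t • δ))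
      ((m + 1) * ∑ β ∈ Nat.antidiagonalTuple 3 m,
        deCasteljauStep δ c β * Bern m β (l + t • δ)) t := by
  set x := l + t • δ
  have hterm (γ : Fin 3 → ℕ) : HasDerivAt (fun t => c γ * Bern (m + 1) γ (l + t • δ))
      (c γ * (Bern.coeff (m + 1) γ *
        ∑ k, γ k * δ k * Bern.mono x (γ - Pi.single k 1))) t :=
    ((Bern.hasDerivAt_mono_add_smul l δ γ t).const_mul _).const_mul _
  refine (HasDerivAt.fun_sum fun γ _ => hterm γ).congr_deriv ?_
  calc ∑ γ ∈ Nat.antidiagonalTuple 3 (m + 1),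
        c γ * (Bern.coeff (m + 1) γ * ∑ k, γ k * δ k * Bern.mono x (γ - Pi.single k 1))
      = ∑ γ ∈ Nat.antidiagonalTuple 3 (m + 1), ∑ k,
          c γ * Bern.coeff (m + 1) γ * γ k * δ k * Bern.mono x (γ - Pi.single k 1) := by
        simp only [mul_sum, mul_assoc]
    _ = ∑ k, ∑ β ∈ Nat.antidiagonalTuple 3 m,
          c (β + Pi.single k 1) * Bern.coeff (m + 1) (β + Pi.single k 1) *
            (β + Pi.single k 1 : Fin 3 → ℕ) k * δ k * Bern.mono x β := by
        rw [Nat.sum_antidiagonalTuple_succ_sum_eq_sum_add_single m _ fun k γ h => by simp [h]]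
        simp only [add_tsub_cancel_right]
    _ = (m + 1) * ∑ β ∈ Nat.antidiagonalTuple 3 m, deCasteljauStep δ c β * Bern m β x := by
        rw [sum_comm, mul_sum]
        refine sum_congr rfl fun β _ => ?_
        rw [deCasteljauStep, sum_mul, mul_sum]
        refine sum_congr rfl fun k _ => ?_
        have key := Bern.mul_coeff_succ_add_single m β k
        simp only [Pi.add_apply, Pi.single_eq_same, Nat.cast_add, Nat.cast_one] at key ⊢
        rw [Bern.eq_coeff_mul_mono]
        linear_combination c (β + Pi.single k 1) * δ k * Bern.mono x β * key

theorem iteratedDeriv_sum_mul_Bern (c : (Fin 3 → ℕ) → ℝ) (l δ : Fin 3 → ℝ) {r d : ℕ}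
    (hrd : r ≤ d) :
    iteratedDeriv r (fun t : ℝ => ∑ γ ∈ Nat.antidiagonalTuple 3 d, c γ * Bern d γ (l + t • δ)) =
      fun t : ℝ => (d.factorial / (d - r).factorial : ℝ) *
        ∑ β ∈ Nat.antidiagonalTuple 3 (d - r),
          (deCasteljauStep δ)^[r] c β * Bern (d - r) β (l + t • δ) := by
  induction r with
  | zero =>
    have : (d.factorial : ℝ) ≠ 0 := by positivity
    simp [this]
  | succ r ih =>
    obtain ⟨m, hm⟩ : ∃ m, d - r = m + 1 := ⟨d - r - 1, by omega⟩
    have hfac : (d.factorial / (m + 1).factorial : ℝ) * (m + 1) = d.factorial / m.factorial := by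
      have : (m.factorial : ℝ) ≠ 0 := by positivity
      rw [Nat.factorial_succ]
      push_cast
      field_simp
    rw [iteratedDeriv_succ, ih (by omega)]
    funext t
    rw [hm, show d - (r + 1) = m by omega,
      ((hasDerivAt_sum_mul_Bern_succ m _ l δ t).const_mul _).deriv, ← mul_assoc, hfac,
      Function.iterate_succ_apply']

theorem stmt8_general (d r : ℕ) (hrd : r ≤ d) (b : (Fin 3 → ℕ) → ℝ)
    (l δ : Fin 3 → ℝ) :
    iteratedDeriv r
        (fun t : ℝ => ∑ a ∈ Finset.Nat.antidiagonalTuple 3 d,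
          b a * Bern d a (fun i => l i + t * δ i)) 0 =
      ∑ a ∈ Finset.Nat.antidiagonalTuple 3 (d - r),
        ((Nat.factorial d : ℝ) / (Nat.factorial (d - r) : ℝ)) *
          (∑ β ∈ Finset.Nat.antidiagonalTuple 3 r, b (a + β) * Bern r β δ) *
          Bern (d - r) a l := by
  refine (congrFun (iteratedDeriv_sum_mul_Bern b l δ hrd) 0).trans ?_
  rw [zero_smul, add_zero, mul_sum]
  exact sum_congr rfl fun a _ => by rw [deCasteljauStep_iterate_apply]; ring

theorem stmt8 (d r : ℕ) (hrd : r ≤ d) (b : (Fin 3 → ℕ) → ℝ)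
    (l δ : Fin 3 → ℝ) (hl : l 0 + l 1 + l 2 = 1) (hδ : δ 0 + δ 1 + δ 2 = 0) :
    iteratedDeriv r
        (fun t : ℝ => ∑ a ∈ Finset.Nat.antidiagonalTuple 3 d,
          b a * Bern d a (fun i => l i + t * δ i)) 0 =
      ∑ a ∈ Finset.Nat.antidiagonalTuple 3 (d - r),
        ((Nat.factorial d : ℝ) / (Nat.factorial (d - r) : ℝ)) *
          (∑ β ∈ Finset.Nat.antidiagonalTuple 3 r, b (a + β) * Bern r β δ) *
          Bern (d - r) a l :=
  stmt8_general d r hrd b l δ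
end

section
/- (Cross derivatives, part 2: mixed directional derivatives.) Let d ≥ r + s, b : {α ∈ ℕ³ : |α| = d} → ℝ, λ ∈ ℝ³ with λ₁+λ₂+λ₃ = 1, and δ, η ∈ ℝ³ with δ₁+δ₂+δ₃ = 0 and η₁+η₂+η₃ = 0. Define g : ℝ² → ℝ by g(u,t) = Σ_{|α|=d} b(α) B_α^d(λ + uδ + tη). Then the mixed partial derivative ∂^r_u ∂^s_t g at (0,0) equals Σ_{|α|=d−r−s} (d!/(d−r−s)!) p_α(δ,η) B_α^{d−r−s}(λ), where p_α(δ,η) = Σ_{|β|=s} p_{α+β}(δ) B_β^s(η) and p_μ(δ) = Σ_{|β|=r} b(μ+β) B_β^r(δ). -/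
open Finset

/-!
Write `B_α^d(v) = d! · v^α/α!`. The divided powers `v^α/α!` obey the multinomial Taylor formula
`(q + t w)^α/α! = Σ_{β ≤ α} q^(α-β)/(α-β)! · w^β/β! · t^|β|`, so `g` is a polynomial in `t` whose
coefficients are again Bernstein-type sums, now in `u`. The `s`-th and then the `r`-th derivative at
`0` pick out `s!` and `r!` times the coefficient of `t^s` and of `u^r`, which gives
`r! s! d! Σ b(α + β' + β) l^α/α! δ^β'/β'! η^β/β!`; regrouping the factorials into Bernstein
polynomials of degrees `r`, `s` and `d - r - s` yields the right-hand side.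
-/

open scoped Nat

lemma add_pow_div_factorial (x y : ℝ) (m : ℕ) :
    (x + y) ^ m / m ! = ∑ j ∈ range (m + 1), x ^ j / j ! * (y ^ (m - j) / (m - j)!) := by
  rw [add_pow, sum_div]
  refine sum_congr rfl fun j hj => ?_
  rw [Nat.cast_choose ℝ (Nat.lt_succ_iff.1 (mem_range.1 hj))]
  field_simp

noncomputable def dividedPow {ι : Type*} [Fintype ι] (v : ι → ℝ) (a : ι → ℕ) : ℝ :=
  ∏ i, v i ^ a i / (a i)!

lemma dividedPow_add_mul {ι : Type*} [Fintype ι] [DecidableEq ι] (q w : ι → ℝ) (t : ℝ)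
    (a : ι → ℕ) :
    dividedPow (fun i => q i + t * w i) a =
      ∑ β ∈ Fintype.piFinset fun i => range (a i + 1),
        dividedPow q (a - β) * dividedPow w β * t ^ ∑ i, β i := by
  simp only [dividedPow, add_comm (q _), add_pow_div_factorial, prod_univ_sum]
  refine sum_congr rfl fun β _ => ?_
  rw [← prod_pow_eq_pow_sum, ← prod_mul_distrib, ← prod_mul_distrib]
  exact prod_congr rfl fun i _ => by simp only [Pi.sub_apply]; ring

lemma sum_antidiagonalTuple_sum_piFinset_range {M : Type*} [AddCommMonoid M] (k d : ℕ)
    (G : (Fin k → ℕ) → (Fin k → ℕ) → M) :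
    ∑ a ∈ Nat.antidiagonalTuple k d, ∑ β ∈ Fintype.piFinset (fun i => range (a i + 1)), G a β =
      ∑ n ∈ range (d + 1), ∑ β ∈ Nat.antidiagonalTuple k n,
        ∑ α ∈ Nat.antidiagonalTuple k (d - n), G (α + β) β := by
  rw [sum_sigma', sum_sigma', sum_sigma']
  refine sum_nbij' (fun p => ⟨⟨∑ i, p.2 i, p.2⟩, p.1 - p.2⟩) (fun y => ⟨y.2 + y.1.2, y.1.2⟩)
    ?_ ?_ ?_ ?_ ?_
  · rintro ⟨a, β⟩ h
    simp only [mem_sigma, Nat.mem_antidiagonalTuple, Fintype.mem_piFinset, mem_range,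
      Nat.lt_succ_iff] at h ⊢
    refine ⟨⟨?_, trivial⟩, ?_⟩
    · rw [← h.1]; exact sum_le_sum fun i _ => h.2 i
    · rw [Pi.sub_def, sum_tsub_distrib _ fun i _ => h.2 i, h.1]
  · rintro ⟨⟨n, β⟩, α⟩ h
    simp only [mem_sigma, Nat.mem_antidiagonalTuple, Fintype.mem_piFinset, mem_range,
      Nat.lt_succ_iff] at h ⊢
    refine ⟨?_, fun i => Nat.le_add_left _ _⟩
    rw [Pi.add_def, sum_add_distrib, h.2, h.1.2]
    omega
  · rintro ⟨a, β⟩ h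
    simp only [mem_sigma, Fintype.mem_piFinset, mem_range, Nat.lt_succ_iff] at h
    simp [tsub_add_cancel_of_le (show β ≤ a from h.2)]
  · rintro ⟨⟨n, β⟩, α⟩ h
    simp only [mem_sigma, Nat.mem_antidiagonalTuple] at h
    simp [h.1.2]
  · rintro ⟨a, β⟩ h
    simp only [mem_sigma, Fintype.mem_piFinset, mem_range, Nat.lt_succ_iff] at h
    simp [tsub_add_cancel_of_le (show β ≤ a from h.2)]

lemma sum_mul_dividedPow_add_mul {k : ℕ} (d : ℕ) (c : (Fin k → ℕ) → ℝ) (q w : Fin k → ℝ)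
    (t : ℝ) :
    ∑ a ∈ Nat.antidiagonalTuple k d, c a * dividedPow (fun i => q i + t * w i) a =
      ∑ n ∈ range (d + 1),
        (∑ β ∈ Nat.antidiagonalTuple k n, ∑ α ∈ Nat.antidiagonalTuple k (d - n),
          c (α + β) * dividedPow q α * dividedPow w β) * t ^ n := by
  simp only [dividedPow_add_mul, mul_sum, sum_antidiagonalTuple_sum_piFinset_range, sum_mul]
  refine sum_congr rfl fun n _ => sum_congr rfl fun β hβ => sum_congr rfl fun α _ => ?_
  rw [add_tsub_cancel_right, (Nat.mem_antidiagonalTuple.1 hβ)]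
  ring

lemma iteratedDeriv_sum_range_mul_pow_zero {N m : ℕ} (hm : m < N) (c : ℕ → ℝ) :
    iteratedDeriv m (fun t : ℝ => ∑ n ∈ range N, c n * t ^ n) 0 = m ! * c m := by
  rw [iteratedDeriv_fun_sum fun n _ => by fun_prop]
  simp only [iteratedDeriv_const_mul_field, iteratedDeriv_fun_pow_zero, Nat.cast_ite,
    Nat.cast_zero, mul_ite, mul_zero]
  rw [sum_ite_eq (range N) m, if_pos (mem_range.2 hm), mul_comm]

lemma iteratedDeriv_sum_mul_dividedPow_add_mul_zero {k m d : ℕ} (hm : m ≤ d)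
    (c : (Fin k → ℕ) → ℝ) (q w : Fin k → ℝ) :
    iteratedDeriv m
        (fun t : ℝ => ∑ a ∈ Nat.antidiagonalTuple k d, c a * dividedPow (fun i => q i + t * w i) a)
        0 =
      m ! * ∑ β ∈ Nat.antidiagonalTuple k m, ∑ α ∈ Nat.antidiagonalTuple k (d - m),
        c (α + β) * dividedPow q α * dividedPow w β := by
  simp only [sum_mul_dividedPow_add_mul]
  exact iteratedDeriv_sum_range_mul_pow_zero (Nat.lt_succ_of_le hm) _

lemma Bern_eq_factorial_mul_dividedPow (d : ℕ) (a : Fin 3 → ℕ) (v : Fin 3 → ℝ) :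
    Bern d a v = d ! * dividedPow v a := by
  rw [Bern, dividedPow, Fin.prod_univ_three]
  ring

theorem stmt9_general (d r s : ℕ) (hrsd : r + s ≤ d) (b : (Fin 3 → ℕ) → ℝ)
    (l δ η : Fin 3 → ℝ) :
    iteratedDeriv r
        (fun u : ℝ => iteratedDeriv s
          (fun t : ℝ => ∑ a ∈ Finset.Nat.antidiagonalTuple 3 d,
            b a * Bern d a (fun i => l i + u * δ i + t * η i)) 0) 0 =
      ∑ a ∈ Finset.Nat.antidiagonalTuple 3 (d - r - s),
        ((Nat.factorial d : ℝ) / (Nat.factorial (d - r - s) : ℝ)) *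
          (∑ β ∈ Finset.Nat.antidiagonalTuple 3 s,
            (∑ β' ∈ Finset.Nat.antidiagonalTuple 3 r, b (a + β + β') * Bern r β' δ) *
              Bern s β η) *
          Bern (d - r - s) a l := by
  have inner (u : ℝ) :
      iteratedDeriv s (fun t : ℝ => ∑ a ∈ Nat.antidiagonalTuple 3 d,
          b a * Bern d a (fun i => l i + u * δ i + t * η i)) 0 =
        ∑ α ∈ Nat.antidiagonalTuple 3 (d - s),
          (s ! * ∑ β ∈ Nat.antidiagonalTuple 3 s, d ! * b (α + β) * dividedPow η β) *
            dividedPow (fun i => l i + u * δ i) α := by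
    simp only [Bern_eq_factorial_mul_dividedPow, ← mul_assoc]
    rw [iteratedDeriv_sum_mul_dividedPow_add_mul_zero (by omega), sum_comm]
    simp only [mul_sum, sum_mul]
    refine sum_congr rfl fun α _ => sum_congr rfl fun β _ => by ring
  simp only [inner]
  rw [iteratedDeriv_sum_mul_dividedPow_add_mul_zero (by omega), show d - s - r = d - r - s by omega,
    sum_comm]
  have hfac : ((d - r - s)! : ℝ) ≠ 0 := by positivity
  simp only [Bern_eq_factorial_mul_dividedPow, mul_sum, sum_mul]
  refine sum_congr rfl fun α _ => ?_
  rw [sum_comm]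
  refine sum_congr rfl fun β _ => sum_congr rfl fun β' _ => ?_
  rw [add_right_comm α β' β]
  field_simp

theorem stmt9 (d r s : ℕ) (hrsd : r + s ≤ d) (b : (Fin 3 → ℕ) → ℝ)
    (l δ η : Fin 3 → ℝ) (hl : l 0 + l 1 + l 2 = 1)
    (hδ : δ 0 + δ 1 + δ 2 = 0) (hη : η 0 + η 1 + η 2 = 0) :
    iteratedDeriv r
        (fun u : ℝ => iteratedDeriv s
          (fun t : ℝ => ∑ a ∈ Finset.Nat.antidiagonalTuple 3 d,
            b a * Bern d a (fun i => l i + u * δ i + t * η i)) 0) 0 =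
      ∑ a ∈ Finset.Nat.antidiagonalTuple 3 (d - r - s),
        ((Nat.factorial d : ℝ) / (Nat.factorial (d - r - s) : ℝ)) *
          (∑ β ∈ Finset.Nat.antidiagonalTuple 3 s,
            (∑ β' ∈ Finset.Nat.antidiagonalTuple 3 r, b (a + β + β') * Bern r β' δ) *
              Bern s β η) *
          Bern (d - r - s) a l :=
  stmt9_general d r s hrsd b l δ η
end

section
/- (Directional derivatives via finite differences.) Let d ≥ r + s, b : {α ∈ ℕ³ : |α| = d} → ℝ, λ ∈ ℝ³ with λ₁+λ₂+λ₃ = 1, and k, l, n ∈ {1,2,3} with l ≠ k and n ≠ k. Set δ = ε_l − ε_k and η = ε_n − ε_k. Define g : ℝ² → ℝ by g(u,t) = Σ_{|α|=d} b(α) B_α^d(λ + uδ + tη). Then ∂^r_u ∂^s_t g at (0,0) equals Σ_{|α|=d−r−s} (d!/(d−r−s)!) (Δ_{kl}^r Δ_{kn}^s b)(α) B_α^{d−r−s}(λ), where the difference operator Δ_{ij} acts on coefficient arrays by (Δ_{ij} b)(α) = b(α + ε_j) − b(α + ε_i). -/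
open Finset

/-- The finite-difference operator `(Δ_{ij} b)(α) = b(α + ε_j) - b(α + ε_i)`
(here `Delta i j` is `Δ_{ij}`). -/
def Delta (i j : Fin 3) (c : (Fin 3 → ℕ) → ℝ) : (Fin 3 → ℕ) → ℝ :=
  fun a => c (a + eps j) - c (a + eps i)

/-! Differentiating `B^{e+1}_α` in the coordinate `j` gives `(e+1) B^e_{α-ε_j}` (zero when
`α_j = 0`), so after reindexing `α = β + ε_j` the derivative of a degree `e+1` Bernstein form
along `ε_n - ε_k` is `e+1` times the degree `e` form with coefficients `Δ_{kn} c`. Iterating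
`s` times along `η` and then `r` times along `δ` produces the factor
`d (d-1) ⋯ (d-r-s+1) = d!/(d-r-s)!`. -/

noncomputable def bernsteinSum (e : ℕ) (c : (Fin 3 → ℕ) → ℝ) (x : Fin 3 → ℝ) : ℝ :=
  ∑ a ∈ Nat.antidiagonalTuple 3 e, c a * Bern e a x

lemma sub_eps_add_eps {a : Fin 3 → ℕ} {j : Fin 3} (h : a j ≠ 0) : a - eps j + eps j = a := by
  ext i
  by_cases hij : i = j <;> simp [eps, hij]
  omega

lemma sum_eps (j : Fin 3) : ∑ i, eps j i = 1 := by simp [eps]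

lemma sum_antidiagonalTuple_succ_eq_sum_add_eps {M : Type*} [AddCommMonoid M] (e : ℕ)
    (j : Fin 3) {g : (Fin 3 → ℕ) → M} (hg : ∀ a, a j = 0 → g a = 0) :
    ∑ a ∈ Nat.antidiagonalTuple 3 (e + 1), g a
      = ∑ β ∈ Nat.antidiagonalTuple 3 e, g (β + eps j) := by
  symm
  refine sum_bij_ne_zero (fun β _ _ => β + eps j) ?_ ?_ ?_ ?_
  · intro β hβ _
    simp_all [Nat.mem_antidiagonalTuple, sum_add_distrib, sum_eps]
  · intro β _ _ γ _ _ h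
    exact add_right_cancel h
  · intro a ha hga
    have haj : a j ≠ 0 := fun h => hga (hg a h)
    refine ⟨a - eps j, ?_, by rwa [sub_eps_add_eps haj], sub_eps_add_eps haj⟩
    rw [Nat.mem_antidiagonalTuple] at ha ⊢
    rw [← sub_eps_add_eps haj] at ha
    simp only [Pi.add_apply, sum_add_distrib, sum_eps] at ha
    omega
  · intros; rfl

/-- The `if` is needed because `a - eps j` truncates to `a` when `a j = 0`. -/
lemma hasDerivAt_bern_line (e : ℕ) (a : Fin 3 → ℕ) (q v : Fin 3 → ℝ) (t : ℝ) :
    HasDerivAt (fun t => Bern (e + 1) a (q + t • v))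
      ((e + 1) * ∑ j, if a j = 0 then 0 else v j * Bern e (a - eps j) (q + t • v)) t := by
  have hx (i : Fin 3) : HasDerivAt (fun t : ℝ => (q + t • v) i) (v i) t := by
    simpa using ((hasDerivAt_id t).mul_const (v i)).const_add (q i)
  have hprod := ((((hx 0).pow (a 0)).mul ((hx 1).pow (a 1))).mul ((hx 2).pow (a 2))).const_mul
    (((e + 1).factorial : ℝ) / ((a 0).factorial * (a 1).factorial * (a 2).factorial))
  refine hprod.congr_deriv ?_
  simp only [Pi.pow_apply, Pi.mul_apply]
  generalize q + t • v = x
  simp only [Fin.sum_univ_three, Bern, eps, Pi.sub_apply]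
  rcases ha0 : a 0 with _ | m0 <;> rcases ha1 : a 1 with _ | m1 <;> rcases ha2 : a 2 with _ | m2 <;>
    simp [Nat.factorial_succ] <;> field_simp

lemma hasDerivAt_bernsteinSum_line (e : ℕ) (c : (Fin 3 → ℕ) → ℝ) (q v : Fin 3 → ℝ)
    (t : ℝ) :
    HasDerivAt (fun t => bernsteinSum (e + 1) c (q + t • v))
      ((e + 1) * ∑ j, v j * bernsteinSum e (fun β => c (β + eps j)) (q + t • v)) t := by
  refine (HasDerivAt.fun_sum fun a _ => (hasDerivAt_bern_line e a q v t).const_mul (c a))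
    |>.congr_deriv ?_
  have hshift (j : Fin 3) :
      ∑ a ∈ Nat.antidiagonalTuple 3 (e + 1),
        c a * (if a j = 0 then 0 else v j * Bern e (a - eps j) (q + t • v))
      = v j * bernsteinSum e (fun β => c (β + eps j)) (q + t • v) := by
    rw [sum_antidiagonalTuple_succ_eq_sum_add_eps e j (fun a ha => by simp [ha]),
      bernsteinSum, mul_sum]
    refine sum_congr rfl fun β _ => ?_
    simp [eps]
    ring
  simp_rw [← hshift, mul_sum, mul_left_comm (c _)]
  exact sum_comm

/-- `ε_n - ε_k` in `ℝ³` (the paper's `δ` and `η`). -/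
def edgeVec (k n : Fin 3) : Fin 3 → ℝ :=
  fun i => (if i = n then 1 else 0) - (if i = k then 1 else 0)

lemma hasDerivAt_bernsteinSum_edge (e : ℕ) (c : (Fin 3 → ℕ) → ℝ) (k n : Fin 3)
    (q : Fin 3 → ℝ) (t : ℝ) :
    HasDerivAt (fun t => bernsteinSum (e + 1) c (q + t • edgeVec k n))
      ((e + 1) * bernsteinSum e (Delta k n c) (q + t • edgeVec k n)) t := by
  refine (hasDerivAt_bernsteinSum_line e c q _ t).congr_deriv ?_
  simp [edgeVec, sub_mul, sum_sub_distrib, bernsteinSum, Delta]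

lemma iteratedDeriv_bernsteinSum_edge (k n : Fin 3) (s e : ℕ) (c : (Fin 3 → ℕ) → ℝ)
    (q : Fin 3 → ℝ) :
    iteratedDeriv s (fun t : ℝ => bernsteinSum (e + s) c (q + t • edgeVec k n))
      = fun t : ℝ => ((e + s).factorial / e.factorial : ℝ) *
          bernsteinSum e ((Delta k n)^[s] c) (q + t • edgeVec k n) := by
  induction s generalizing e with
  | zero =>
    funext t
    simp [Nat.factorial_ne_zero]
  | succ s ih =>
    rw [show e + (s + 1) = e + 1 + s by ring, iteratedDeriv_succ, ih (e + 1)]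
    funext t
    rw [((hasDerivAt_bernsteinSum_edge e _ k n q t).const_mul _).deriv,
      Function.iterate_succ_apply', Nat.factorial_succ]
    push_cast
    field_simp

lemma iteratedDeriv_iteratedDeriv_bernsteinSum_edge (e r s : ℕ) (c : (Fin 3 → ℕ) → ℝ)
    (q : Fin 3 → ℝ) (k n m : Fin 3) :
    iteratedDeriv r (fun u : ℝ => iteratedDeriv s (fun t : ℝ =>
        bernsteinSum (e + r + s) c (q + u • edgeVec k n + t • edgeVec k m)) 0) 0
      = ((e + r + s).factorial / e.factorial : ℝ) *
          bernsteinSum e ((Delta k n)^[r] ((Delta k m)^[s] c)) q := by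
  have hinner (u : ℝ) :
      iteratedDeriv s (fun t : ℝ =>
          bernsteinSum (e + r + s) c (q + u • edgeVec k n + t • edgeVec k m)) 0
        = ((e + r + s).factorial / (e + r).factorial : ℝ) *
          bernsteinSum (e + r) ((Delta k m)^[s] c) (q + u • edgeVec k n) := by
    simp [iteratedDeriv_bernsteinSum_edge]
  simp only [hinner, iteratedDeriv_const_mul_field, iteratedDeriv_bernsteinSum_edge, zero_smul,
    add_zero]
  field_simp

theorem stmt10_general (d r s : ℕ) (hrsd : r + s ≤ d) (b : (Fin 3 → ℕ) → ℝ)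
    (l : Fin 3 → ℝ)
    (k n m : Fin 3) :
    iteratedDeriv r
        (fun u : ℝ => iteratedDeriv s
          (fun t : ℝ => ∑ a ∈ Finset.Nat.antidiagonalTuple 3 d,
            b a * Bern d a (fun i => l i
              + u * ((if i = n then (1 : ℝ) else 0) - (if i = k then 1 else 0))
              + t * ((if i = m then (1 : ℝ) else 0) - (if i = k then 1 else 0)))) 0) 0 =
      ∑ a ∈ Finset.Nat.antidiagonalTuple 3 (d - r - s),
        ((Nat.factorial d : ℝ) / (Nat.factorial (d - r - s) : ℝ)) *
          ((Delta k n)^[r] ((Delta k m)^[s] b) a) *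
          Bern (d - r - s) a l := by
  obtain ⟨e, rfl⟩ : ∃ e, d = e + r + s := ⟨d - r - s, by omega⟩
  refine (iteratedDeriv_iteratedDeriv_bernsteinSum_edge e r s b l k n m).trans ?_
  rw [show e + r + s - r - s = e by omega, bernsteinSum, mul_sum]
  simp only [mul_assoc]

theorem stmt10 (d r s : ℕ) (hrsd : r + s ≤ d) (b : (Fin 3 → ℕ) → ℝ)
    (l : Fin 3 → ℝ) (hl : l 0 + l 1 + l 2 = 1)
    (k n m : Fin 3) (hn : n ≠ k) (hm : m ≠ k) :
    iteratedDeriv r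
        (fun u : ℝ => iteratedDeriv s
          (fun t : ℝ => ∑ a ∈ Finset.Nat.antidiagonalTuple 3 d,
            b a * Bern d a (fun i => l i
              + u * ((if i = n then (1 : ℝ) else 0) - (if i = k then 1 else 0))
              + t * ((if i = m then (1 : ℝ) else 0) - (if i = k then 1 else 0)))) 0) 0 =
      ∑ a ∈ Finset.Nat.antidiagonalTuple 3 (d - r - s),
        ((Nat.factorial d : ℝ) / (Nat.factorial (d - r - s) : ℝ)) *
          ((Delta k n)^[r] ((Delta k m)^[s] b) a) *
          Bern (d - r - s) a l :=
  stmt10_general d r s hrsd b l k n m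
end

section
/- (C⁰ continuity of the Clough–Tocher quintic pieces, equation k = 0.) Let b̃ : {α ∈ ℕ³ : |α| = 3} → ℝ and define C_i (i = 1,2,3) by the Clough–Tocher coefficient pipeline. Then for every i ∈ {1,2,3} (indices taken mod 3) and every 0 ≤ ρ ≤ 5: C_{i+1}(0, ρ, 5−ρ) = C_i(5−ρ, ρ, 0). -/
open Finset

/-- The cyclic permutation `σ` of the three coordinates. -/
def rot3 (x : Fin 3 → ℕ) : Fin 3 → ℕ := ![x 2, x 0, x 1]

/-- The subdivision coefficients `b̃ᵢ(ρ) = Σ_{|α|=ρ₂} b̃(α + σ^i(ρ₃,ρ₁,0)) B_α^{ρ₂}(1/3,1/3,1/3)`. -/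
noncomputable def btil (b : (Fin 3 → ℕ) → ℝ) (i : ℕ) (ρ : Fin 3 → ℕ) : ℝ :=
  ∑ a ∈ Finset.Nat.antidiagonalTuple 3 (ρ 1),
    b (a + rot3^[i] ![ρ 2, ρ 0, 0]) * Bern (ρ 1) a (fun _ => 1 / 3)

/-- The doubly degree-raised coefficients
`b̃ᵢ⁽²⁾(μ) = Σ_{k,l} (μ_k(μ_l - δ_{kl})/20) b̃ᵢ(μ - ε_k - ε_l)`
(terms where `μ - ε_k - ε_l` would have a negative entry carry a zero coefficient). -/
noncomputable def btil2 (b : (Fin 3 → ℕ) → ℝ) (i : ℕ) (μ : Fin 3 → ℕ) : ℝ :=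
  ∑ k : Fin 3, ∑ l : Fin 3,
    ((μ k : ℝ) * ((μ l : ℝ) - if k = l then 1 else 0) / 20) * btil b i (μ - eps k - eps l)

/-- The Bézier coefficients `Cᵢ(β) = Σ_{|μ|=5} b̃_{i+2}⁽²⁾(μ) B_{μ₁}^{β₁}(5/3) B_{μ₃}^{β₃}(5/3)`. -/
noncomputable def Ccoef (b : (Fin 3 → ℕ) → ℝ) (i : ℕ) (β : Fin 3 → ℕ) : ℝ :=
  ∑ μ ∈ Finset.Nat.antidiagonalTuple 3 5,
    btil2 b (i + 2) μ * bern1 (β 0) (μ 0) (5 / 3) * bern1 (β 2) (μ 2) (5 / 3)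


lemma sub3 (x y z u v w : ℕ) : (![x,y,z] - ![u,v,w] : Fin 3 → ℕ) = ![x-u, y-v, z-w] := by
  funext j; fin_cases j <;> rfl

lemma eps0 : eps (0 : Fin 3) = ![1,0,0] := by funext j; fin_cases j <;> rfl
lemma eps1 : eps (1 : Fin 3) = ![0,1,0] := by funext j; fin_cases j <;> rfl
lemma eps2 : eps (2 : Fin 3) = ![0,0,1] := by funext j; fin_cases j <;> rfl

lemma btil_shift (b : (Fin 3 → ℕ) → ℝ) (i p q : ℕ) :
    btil b (i+1) ![0,p,q] = btil b i ![q,p,0] := by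
  unfold btil
  have h1 : (![0,p,q] : Fin 3 → ℕ) 1 = p := rfl
  have h2 : (![q,p,0] : Fin 3 → ℕ) 1 = p := rfl
  rw [h1, h2]
  have harg : rot3^[i+1] ![(![0,p,q] : Fin 3 → ℕ) 2, (![0,p,q] : Fin 3 → ℕ) 0, 0]
      = rot3^[i] ![(![q,p,0] : Fin 3 → ℕ) 2, (![q,p,0] : Fin 3 → ℕ) 0, 0] := by
    have hr : rot3 ![q,0,0] = ![0,q,0] := by
      funext j; fin_cases j <;> rfl
    rw [Function.iterate_succ_apply]
    exact congrArg _ hr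
  rw [harg]

lemma btil2_shift (b : (Fin 3 → ℕ) → ℝ) (i a c : ℕ) :
    btil2 b (i+1) ![0,a,c] = btil2 b i ![c,a,0] := by
  unfold btil2
  simp only [Fin.sum_univ_three, eps0, eps1, eps2, sub3,
    Matrix.cons_val_zero, Matrix.cons_val_one, Matrix.head_cons,
    Matrix.cons_val_two, Matrix.tail_cons, Nat.cast_zero, Fin.reduceEq,
    if_true, if_false, ite_true, ite_false]
  norm_num
  rw [btil_shift b i (a-1-1) c, btil_shift b i (a-1) (c-1), btil_shift b i a (c-1-1)]
  ring

theorem stmt12 (b : (Fin 3 → ℕ) → ℝ) :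
    ∀ i ∈ ({1, 2, 3} : Finset ℕ), ∀ ρ ≤ 5,
      Ccoef b (i + 1) ![0, ρ, 5 - ρ] = Ccoef b i ![5 - ρ, ρ, 0] := by
  intro i _ ρ _
  unfold Ccoef
  refine Finset.sum_nbij' (fun μ => ![μ 2, μ 1, μ 0]) (fun μ => ![μ 2, μ 1, μ 0]) ?_ ?_ ?_ ?_ ?_
  · intro μ hμ
    simp only [Finset.Nat.mem_antidiagonalTuple, Fin.sum_univ_three,
      Matrix.cons_val_zero, Matrix.cons_val_one, Matrix.head_cons,
      Matrix.cons_val_two, Matrix.tail_cons] at hμ ⊢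
    omega
  · intro μ hμ
    simp only [Finset.Nat.mem_antidiagonalTuple, Fin.sum_univ_three,
      Matrix.cons_val_zero, Matrix.cons_val_one, Matrix.head_cons,
      Matrix.cons_val_two, Matrix.tail_cons] at hμ ⊢
    omega
  · intro μ _; funext j; fin_cases j <;> rfl
  · intro μ _; funext j; fin_cases j <;> rfl
  · intro μ _
    simp only [Matrix.cons_val_zero, Matrix.cons_val_one, Matrix.head_cons,
      Matrix.cons_val_two, Matrix.tail_cons]
    rcases Nat.eq_zero_or_pos (μ 0) with h0 | h0
    · have hμ : μ = ![0, μ 1, μ 2] := by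
        funext j; fin_cases j <;> simp [h0]
      have key : btil2 b (i + 1 + 2) μ = btil2 b (i + 2) ![μ 2, μ 1, μ 0] := by
        rw [h0]
        nth_rewrite 1 [hμ]
        exact btil2_shift b (i+2) (μ 1) (μ 2)
      rw [key, h0]
      ring
    · have hb : bern1 0 (μ 0) (5/3) = 0 := by
        unfold bern1
        rw [Nat.choose_eq_zero_of_lt h0]
        simp
      rw [hb]; ring
end

section
/- (C² continuity of the Clough–Tocher quintic pieces, equation k = 2.) Let b̃ : {α ∈ ℕ³ : |α| = 3} → ℝ and define C_i (i = 1,2,3) by the Clough–Tocher coefficient pipeline. Then for every i ∈ {1,2,3} (indices taken mod 3) and every 0 ≤ ρ ≤ 3: C_{i+1}(2, ρ, 3−ρ) = C_i(5−ρ, ρ, 0) − 6·C_i(4−ρ, ρ+1, 0) + 9·C_i(3−ρ, ρ+2, 0) + 2·C_i(4−ρ, ρ, 1) − 6·C_i(3−ρ, ρ+1, 1) + C_i(3−ρ, ρ, 2). -/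
open Finset

/-! The rotation `σ` only relabels the three subtriangles: reindexing the sums by `σ` gives
`C_{i+j}(b̃) = C_j(b̃ ∘ σ^i)`, so it suffices to compare `C_1` with `C_0`. There the claim is a
linear identity in the ten values of `b̃`, verified by expanding every sum. -/

theorem Finset.Nat.sum_antidiagonalTuple_three {M : Type*} [AddCommMonoid M] (n : ℕ)
    (f : (Fin 3 → ℕ) → M) :
    ∑ x ∈ antidiagonalTuple 3 n, f x =
      ∑ i ∈ range (n + 1), ∑ j ∈ range (n + 1 - i), f ![i, j, n - i - j] := by
  have eq_vec : ∀ x : Fin 3 → ℕ, x 0 + x 1 + x 2 = n → ![x 0, x 1, n - x 0 - x 1] = x := by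
    intro x hx
    ext j; fin_cases j <;> simp; omega
  rw [sum_sigma']
  refine sum_nbij' (fun x => ⟨x 0, x 1⟩) (fun p => ![p.1, p.2, n - p.1 - p.2]) ?_ ?_ ?_ ?_ ?_
  all_goals simp only [mem_sigma, mem_range, mem_antidiagonalTuple,
    Fin.sum_univ_three, Matrix.cons_val_zero, Matrix.cons_val_one, Matrix.cons_val_two,
    Matrix.head_cons, Matrix.tail_cons]
  · intro x hx; omega
  · intro p hp; omega
  · exact eq_vec
  · intro p _; trivial
  · intro x hx; rw [eq_vec x hx]

theorem rot3_cons (x y z : ℕ) : rot3 ![x, y, z] = ![z, x, y] := rfl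

theorem rot3_add (x y : Fin 3 → ℕ) : rot3 (x + y) = rot3 x + rot3 y := by
  ext j; fin_cases j <;> rfl

theorem rot3_rot3_rot3 (x : Fin 3 → ℕ) : rot3 (rot3 (rot3 x)) = x := by
  ext j; fin_cases j <;> rfl

theorem rot3_mem_antidiagonalTuple {n : ℕ} {x : Fin 3 → ℕ} :
    rot3 x ∈ Finset.Nat.antidiagonalTuple 3 n ↔ x ∈ Finset.Nat.antidiagonalTuple 3 n := by
  simp only [Finset.Nat.mem_antidiagonalTuple, Fin.sum_univ_three, rot3, Matrix.cons_val_zero,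
    Matrix.cons_val_one, Matrix.cons_val_two, Matrix.head_cons, Matrix.tail_cons]
  omega

theorem Bern_rot3_const (d : ℕ) (a : Fin 3 → ℕ) (t : ℝ) :
    Bern d (rot3 a) (fun _ => t) = Bern d a (fun _ => t) := by
  simp only [Bern, rot3, Matrix.cons_val_zero, Matrix.cons_val_one, Matrix.cons_val_two,
    Matrix.head_cons, Matrix.tail_cons]
  ring

theorem btil_succ (b : (Fin 3 → ℕ) → ℝ) (i : ℕ) (ρ : Fin 3 → ℕ) :
    btil b (i + 1) ρ = btil (b ∘ rot3) i ρ := by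
  refine (sum_nbij' rot3 (fun a => rot3 (rot3 a)) (fun a ha => ?_) (fun a ha => ?_)
    (fun a _ => rot3_rot3_rot3 a) (fun a _ => rot3_rot3_rot3 a) (fun a _ => ?_)).symm
  · exact rot3_mem_antidiagonalTuple.2 ha
  · exact rot3_mem_antidiagonalTuple.2 (rot3_mem_antidiagonalTuple.2 ha)
  · rw [Function.iterate_succ_apply', ← rot3_add, Bern_rot3_const, Function.comp_apply]

theorem btil_add (b : (Fin 3 → ℕ) → ℝ) (i j : ℕ) (ρ : Fin 3 → ℕ) :
    btil b (i + j) ρ = btil (b ∘ rot3^[i]) j ρ := by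
  induction i generalizing b with
  | zero => rw [zero_add, Function.iterate_zero, Function.comp_id]
  | succ i ih =>
    rw [add_right_comm, btil_succ, ih, Function.iterate_succ', Function.comp_assoc]

theorem Ccoef_add (b : (Fin 3 → ℕ) → ℝ) (i j : ℕ) (β : Fin 3 → ℕ) :
    Ccoef b (i + j) β = Ccoef (b ∘ rot3^[i]) j β := by
  simp only [Ccoef, btil2, add_assoc i j 2, btil_add]

theorem bern1_eq_zero_of_lt {n k : ℕ} (t : ℝ) (h : n < k) : bern1 n k t = 0 := by
  rw [bern1, Nat.choose_eq_zero_of_lt h, Nat.cast_zero, zero_mul, zero_mul]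

theorem eps_zero : eps 0 = ![1, 0, 0] := by ext j; fin_cases j <;> rfl

theorem eps_one : eps 1 = ![0, 1, 0] := by ext j; fin_cases j <;> rfl

theorem eps_two : eps 2 = ![0, 0, 1] := by ext j; fin_cases j <;> rfl

theorem Ccoef_one_smoothness (c : (Fin 3 → ℕ) → ℝ) (ρ : ℕ) (hρ : ρ ≤ 3) :
    Ccoef c 1 ![2, ρ, 3 - ρ] =
      Ccoef c 0 ![5 - ρ, ρ, 0] - 6 * Ccoef c 0 ![4 - ρ, ρ + 1, 0]
        + 9 * Ccoef c 0 ![3 - ρ, ρ + 2, 0] + 2 * Ccoef c 0 ![4 - ρ, ρ, 1]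
        - 6 * Ccoef c 0 ![3 - ρ, ρ + 1, 1] + Ccoef c 0 ![3 - ρ, ρ, 2] := by
  interval_cases ρ <;>
  · simp only [Ccoef, Finset.Nat.sum_antidiagonalTuple_three, sum_range_succ, sum_range_zero,
      zero_add, Nat.reduceAdd, Nat.reduceSub, Matrix.cons_val_zero, Matrix.cons_val_two,
      Matrix.head_cons, Matrix.tail_cons]
    -- pruning the terms with `B_k^n = 0`, `k > n`, first keeps the expansion of the inner sums small
    simp (disch := decide) only [bern1_eq_zero_of_lt, mul_zero, zero_mul, add_zero, zero_add]
    simp only [btil2, Fin.sum_univ_three, eps_zero, eps_one, eps_two, Matrix.cons_sub_cons,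
      Matrix.empty_sub_empty, Matrix.cons_val_zero, Matrix.cons_val_one, Matrix.head_cons,
      Matrix.cons_val_two, Matrix.tail_cons, Nat.reduceSub, Nat.cast_ofNat, Nat.cast_zero,
      Nat.cast_one, Fin.reduceEq, reduceIte, sub_self, sub_zero, zero_mul, mul_zero, zero_div,
      zero_add, add_zero]
    simp only [btil, Finset.Nat.sum_antidiagonalTuple_three, sum_range_succ, sum_range_zero,
      zero_add, Nat.reduceAdd, Nat.reduceSub, Matrix.cons_val_zero, Matrix.cons_val_one,
      Matrix.cons_val_two, Matrix.head_cons, Matrix.tail_cons, Function.iterate_succ_apply',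
      Function.iterate_zero_apply, rot3_cons, Matrix.cons_add_cons, Matrix.empty_add_empty]
    norm_num only [bern1, Bern, Nat.factorial, Nat.choose, Matrix.cons_val_zero,
      Matrix.cons_val_one, Matrix.cons_val_two, Matrix.head_cons, Matrix.tail_cons]
    ring

theorem stmt14 (b : (Fin 3 → ℕ) → ℝ) :
    ∀ i ∈ ({1, 2, 3} : Finset ℕ), ∀ ρ ≤ 3,
      Ccoef b (i + 1) ![2, ρ, 3 - ρ] =
        Ccoef b i ![5 - ρ, ρ, 0] - 6 * Ccoef b i ![4 - ρ, ρ + 1, 0]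
          + 9 * Ccoef b i ![3 - ρ, ρ + 2, 0] + 2 * Ccoef b i ![4 - ρ, ρ, 1]
          - 6 * Ccoef b i ![3 - ρ, ρ + 1, 1] + Ccoef b i ![3 - ρ, ρ, 2] := by
  intro i _ ρ hρ
  have h₀ (β : Fin 3 → ℕ) : Ccoef b i β = Ccoef (b ∘ rot3^[i]) 0 β := Ccoef_add b i 0 β
  rw [Ccoef_add]
  simp only [h₀]
  exact Ccoef_one_smoothness _ ρ hρ
end

section
/- (Unisolvence of the Lagrange finite element of type 3.) Let B₁, B₂, B₃ ∈ ℝ² be affinely independent. For each multi-index α ∈ ℕ³ with |α| = 3, let ξ_α = (α₁B₁ + α₂B₂ + α₃B₃)/3 (these are 10 points: the three vertices, the six points of the form (2B_i + B_j)/3 with i ≠ j, and the centroid). Then for any prescribed values (y_α), there exists a unique bivariate polynomial function p : ℝ² → ℝ of total degree ≤ 3 such that p(ξ_α) = y_α for all |α| = 3. Equivalently, a polynomial of degree ≤ 3 vanishing at all 10 points ξ_α is identically zero. -/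
open Finset

/-!
The barycentric coordinates `λ_i` of the simplex are affine, hence polynomials of degree `≤ 1`.
For a node `a` (with `|a| = m`), the product `∏_i (m λ_i)(m λ_i - 1)⋯(m λ_i - a_i + 1) / a_i!`
has degree `≤ m`, and at the node `ξ_b`, where `m λ_i = b_i`, it equals
`∏_i b_i(b_i - 1)⋯(b_i - a_i + 1) / a_i!`, which is `1` for `b = a` and `0` otherwise (then some
`b_i < a_i`). So evaluation at the nodes maps the polynomials of degree `≤ m` onto all data.
The nodes are as many as the monomials of degree `≤ m` (append the defect `m - |d|` to an
exponent `d`), so this surjection between spaces of equal dimension is a bijection.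
-/

open MvPolynomial Nat

namespace MvPolynomial

variable {R : Type*} [CommRing R]

noncomputable def degreeLeEquivAntidiagonalTuple (n m : ℕ) :
    {s : Fin n →₀ ℕ | (s.sum fun _ e => e) ≤ m} ≃ Finset.Nat.antidiagonalTuple (n + 1) m where
  toFun s := ⟨Fin.snoc (⇑s.1) (m - ∑ i, s.1 i), by
    have hs : ∑ i, s.1 i ≤ m := by simpa [Finsupp.sum_fintype] using s.2
    rw [Finset.Nat.mem_antidiagonalTuple, Fin.sum_univ_castSucc]
    simp only [Fin.snoc_castSucc, Fin.snoc_last]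
    omega⟩
  invFun a := ⟨Finsupp.equivFunOnFinite.symm (Fin.init a.1), by
    have ha := Finset.Nat.mem_antidiagonalTuple.mp a.2
    rw [Fin.sum_univ_castSucc] at ha
    change (Finsupp.sum _ fun _ e => e) ≤ m
    rw [Finsupp.sum_fintype _ _ fun _ => rfl]
    simp only [Finsupp.coe_equivFunOnFinite_symm, Fin.init]
    omega⟩
  left_inv s := by ext i; simp
  right_inv a := by
    have ha := Finset.Nat.mem_antidiagonalTuple.mp a.2
    rw [Fin.sum_univ_castSucc] at ha
    ext1
    conv_rhs => rw [← Fin.snoc_init_self a.1]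
    simp only [Finsupp.coe_equivFunOnFinite_symm, Fin.init]
    congr 1
    omega

theorem finrank_restrictTotalDegree_fin [Nontrivial R] (n m : ℕ) :
    Module.finrank R (restrictTotalDegree (Fin n) R m) =
      #(Finset.Nat.antidiagonalTuple (n + 1) m) := by
  rw [restrictTotalDegree, Module.finrank_eq_nat_card_basis (basisRestrictSupport R _),
    Nat.card_congr (degreeLeEquivAntidiagonalTuple n m), Nat.card_eq_fintype_card,
    Fintype.card_coe]

variable {σ : Type*}

theorem totalDegree_aeval_le (p : MvPolynomial σ R) (P : Polynomial R) :
    (Polynomial.aeval p P).totalDegree ≤ P.natDegree * p.totalDegree := by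
  rw [Polynomial.aeval_eq_sum_range]
  refine totalDegree_finsetSum_le fun i hi => ?_
  calc (P.coeff i • p ^ i).totalDegree ≤ (p ^ i).totalDegree := totalDegree_smul_le _ _
    _ ≤ i * p.totalDegree := totalDegree_pow _ _
    _ ≤ P.natDegree * p.totalDegree :=
      Nat.mul_le_mul_right _ (Nat.lt_succ_iff.mp (Finset.mem_range.mp hi))

theorem eval_aeval (x : σ → R) (p : MvPolynomial σ R) (P : Polynomial R) :
    eval x (Polynomial.aeval p P) = P.eval (eval x p) :=
  (Polynomial.aeval_algHom_apply (aeval x) p P).symm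

theorem exists_totalDegree_le_one_eval_eq [Fintype σ] [DecidableEq σ] (f : (σ → R) →ᵃ[R] R) :
    ∃ ℓ : MvPolynomial σ R, ℓ.totalDegree ≤ 1 ∧ ∀ x, eval x ℓ = f x := by
  refine ⟨C (f 0) + ∑ j, C (f.linear (Pi.single j 1)) * X j, ?_, fun x => ?_⟩
  · refine (totalDegree_add _ _).trans (max_le (by simp) (totalDegree_finsetSum_le fun j _ => ?_))
    refine (totalDegree_mul _ _).trans ?_
    simpa [X] using totalDegree_monomial_le (Finsupp.single j 1) (1 : R)
  · conv_rhs => rw [← vsub_vadd x 0, f.map_vadd, vsub_eq_sub, sub_zero, pi_eq_sum_univ' x]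
    simp [map_sum, mul_comm, add_comm]

noncomputable def evalAt {ι : Type*} (ξ : ι → σ → R) : MvPolynomial σ R →ₗ[R] ι → R :=
  LinearMap.pi fun a => (aeval (ξ a)).toLinearMap

@[simp]
theorem evalAt_apply {ι : Type*} (ξ : ι → σ → R) (q : MvPolynomial σ R) (a : ι) :
    evalAt ξ q a = eval (ξ a) q :=
  rfl

end MvPolynomial

section Lagrange

variable {K : Type*} [Field K] {σ ι : Type*} [Fintype ι]

noncomputable def lagrangeLatticeBasis (ℓ : ι → MvPolynomial σ K) (m : ℕ) (a : ι → ℕ) :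
    MvPolynomial σ K :=
  C (∏ i, ((a i)! : K))⁻¹ * ∏ i, Polynomial.aeval (C (m : K) * ℓ i) (descPochhammer K (a i))

def latticeNode (B : ι → σ → K) (m : ℕ) (a : ι → ℕ) : σ → K :=
  ∑ i, ((a i : K) / m) • B i

variable {ℓ : ι → MvPolynomial σ K} {m : ℕ}

theorem totalDegree_lagrangeLatticeBasis_le (hℓ : ∀ i, (ℓ i).totalDegree ≤ 1) (a : ι → ℕ) :
    (lagrangeLatticeBasis ℓ m a).totalDegree ≤ ∑ i, a i := by
  refine (totalDegree_mul _ _).trans ?_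
  rw [totalDegree_C, zero_add]
  refine (totalDegree_finsetProd _ _).trans (Finset.sum_le_sum fun i _ => ?_)
  calc _ ≤ (descPochhammer K (a i)).natDegree * (C (m : K) * ℓ i).totalDegree :=
        totalDegree_aeval_le _ _
    _ ≤ a i * 1 := by
        rw [descPochhammer_natDegree]
        refine Nat.mul_le_mul_left _ ((totalDegree_mul _ _).trans ?_)
        rw [totalDegree_C, zero_add]
        exact hℓ i
    _ = a i := mul_one _

variable [CharZero K]

theorem eval_lagrangeLatticeBasis [DecidableEq ι] (hm : m ≠ 0) {x : σ → K}
    {a b : ι → ℕ} (hx : ∀ i, eval x (ℓ i) = b i / m) (hab : ∑ i, a i = ∑ i, b i) :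
    eval x (lagrangeLatticeBasis ℓ m a) = if a = b then 1 else 0 := by
  have hfactor : ∀ i, eval x (Polynomial.aeval (C (m : K) * ℓ i) (descPochhammer K (a i))) =
      ((b i).descFactorial (a i) : K) := fun i => by
    rw [eval_aeval, map_mul, eval_C, hx, mul_div_cancel₀ _ (Nat.cast_ne_zero.mpr hm),
      descPochhammer_eval_eq_descFactorial]
  simp only [lagrangeLatticeBasis, map_mul, eval_C, map_prod, hfactor]
  split_ifs with h
  · subst h
    simp only [Nat.descFactorial_self]
    exact inv_mul_cancel₀ (Finset.prod_ne_zero_iff.mpr fun i _ =>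
      Nat.cast_ne_zero.mpr (Nat.factorial_ne_zero _))
  · obtain ⟨i, hi⟩ : ∃ i, b i < a i := by
      by_contra! hle
      exact h (funext ((Finset.sum_eq_sum_iff_of_le fun i _ => hle i).mp hab · (mem_univ _)))
    refine mul_eq_zero_of_right _ (Finset.prod_eq_zero (mem_univ i) ?_)
    rw [Nat.descFactorial_eq_zero_iff_lt.mpr hi, Nat.cast_zero]

theorem AffineBasis.coord_latticeNode (b : AffineBasis ι K (σ → K)) (hm : m ≠ 0)
    {a : ι → ℕ} (ha : ∑ i, a i = m) (i : ι) : b.coord i (latticeNode (⇑b) m a) = a i / m := by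
  have hw : ∑ j, (a j : K) / m = 1 := by
    rw [← Finset.sum_div, ← Nat.cast_sum, ha, div_self (Nat.cast_ne_zero.mpr hm)]
  rw [latticeNode, ← Finset.affineCombination_eq_linear_combination _ _ _ hw,
    b.coord_apply_combination_of_mem (mem_univ i) hw]

end Lagrange

section Unisolvence

variable {K : Type*} [Field K] [CharZero K] {n m : ℕ}

theorem surjective_evalAt_latticeNode (b : AffineBasis (Fin (n + 1)) K (Fin n → K)) (hm : m ≠ 0) :
    Function.Surjective ((evalAt fun a : Finset.Nat.antidiagonalTuple (n + 1) m =>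
      latticeNode (⇑b) m a.1).domRestrict (restrictTotalDegree (Fin n) K m)) := by
  choose ℓ hℓ_deg hℓ_eval using fun i => exists_totalDegree_le_one_eval_eq (b.coord i)
  have hsum : ∀ a ∈ Finset.Nat.antidiagonalTuple (n + 1) m, ∑ i, a i = m :=
    fun a ha => Finset.Nat.mem_antidiagonalTuple.mp ha
  intro y
  refine ⟨⟨∑ a, y a • lagrangeLatticeBasis ℓ m a.1, ?_⟩, funext fun c => ?_⟩
  · refine Submodule.sum_mem _ fun a _ => Submodule.smul_mem _ _ ?_
    rw [mem_restrictTotalDegree]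
    exact (totalDegree_lagrangeLatticeBasis_le hℓ_deg _).trans (hsum a.1 a.2).le
  · have hnode : ∀ i, eval (latticeNode (⇑b) m c.1) (ℓ i) = c.1 i / m := fun i => by
      rw [hℓ_eval, b.coord_latticeNode hm (hsum c.1 c.2)]
    have hkron : ∀ a : Finset.Nat.antidiagonalTuple (n + 1) m,
        eval (latticeNode (⇑b) m c.1) (lagrangeLatticeBasis ℓ m a.1) = if a = c then 1 else 0 :=
      fun a => by
        rw [eval_lagrangeLatticeBasis hm hnode ((hsum a.1 a.2).trans (hsum c.1 c.2).symm)]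
        exact if_congr Subtype.ext_iff.symm rfl rfl
    simp only [LinearMap.domRestrict_apply, evalAt_apply, map_sum, smul_eval, hkron, mul_ite,
      mul_one, mul_zero, Finset.sum_ite_eq', mem_univ, if_true]

theorem bijective_evalAt_latticeNode (b : AffineBasis (Fin (n + 1)) K (Fin n → K)) (hm : m ≠ 0) :
    Function.Bijective ((evalAt fun a : Finset.Nat.antidiagonalTuple (n + 1) m =>
      latticeNode (⇑b) m a.1).domRestrict (restrictTotalDegree (Fin n) K m)) := by
  have hsurj := surjective_evalAt_latticeNode b hm
  refine ⟨(LinearMap.injective_iff_surjective_of_finrank_eq_finrank ?_).mpr hsurj, hsurj⟩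
  rw [finrank_restrictTotalDegree_fin, Module.finrank_fintype_fun_eq_card, Fintype.card_coe]

theorem existsUnique_interpolant_latticeNode {B : Fin (n + 1) → Fin n → K}
    (hB : AffineIndependent K B) (hm : m ≠ 0) (y : (Fin (n + 1) → ℕ) → K) :
    ∃! p : (Fin n → K) → K,
      (∃ q : MvPolynomial (Fin n) K, q.totalDegree ≤ m ∧ ∀ x, p x = eval x q) ∧
      ∀ a ∈ Finset.Nat.antidiagonalTuple (n + 1) m, p (latticeNode B m a) = y a := by
  let b : AffineBasis (Fin (n + 1)) K (Fin n → K) :=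
    ⟨B, hB, hB.affineSpan_eq_top_iff_card_eq_finrank_add_one.mpr (by simp)⟩
  obtain ⟨hinj, hsurj⟩ := bijective_evalAt_latticeNode b hm
  obtain ⟨⟨q, hq⟩, hqy⟩ := hsurj fun a => y a
  refine ⟨fun x => eval x q, ⟨⟨q, (mem_restrictTotalDegree _ _ _).mp hq, fun _ => rfl⟩,
    fun a ha => congrFun hqy ⟨a, ha⟩⟩, ?_⟩
  rintro p ⟨⟨q', hq', hpq'⟩, hpy⟩
  have hq'q : (⟨q', (mem_restrictTotalDegree _ _ _).mpr hq'⟩ : restrictTotalDegree _ K m) =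
      ⟨q, hq⟩ :=
    hinj (hqy.trans (funext fun a => (hpy a.1 a.2).symm.trans (hpq' _))).symm
  exact funext fun x => (hpq' x).trans (congrArg (eval x ∘ Subtype.val) hq'q)

end Unisolvence

theorem stmt15 (B : Fin 3 → (Fin 2 → ℝ)) (hB : AffineIndependent ℝ B)
    (y : (Fin 3 → ℕ) → ℝ) :
    ∃! p : (Fin 2 → ℝ) → ℝ,
      (∃ q : MvPolynomial (Fin 2) ℝ, q.totalDegree ≤ 3 ∧ ∀ x, p x = MvPolynomial.eval x q) ∧
      ∀ a ∈ Finset.Nat.antidiagonalTuple 3 3,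
        p (fun j => ((a 0 : ℝ) * B 0 j + (a 1 : ℝ) * B 1 j + (a 2 : ℝ) * B 2 j) / 3) = y a := by
  have hnode : ∀ a : Fin 3 → ℕ,
      (fun j => ((a 0 : ℝ) * B 0 j + (a 1 : ℝ) * B 1 j + (a 2 : ℝ) * B 2 j) / 3) =
        latticeNode B 3 a := fun a => by
    funext j
    simp only [latticeNode, Fin.sum_univ_three, Finset.sum_apply, Pi.smul_apply,
      smul_eq_mul, Nat.cast_ofNat]
    ring
  simpa only [hnode] using existsUnique_interpolant_latticeNode hB three_ne_zero y
end
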